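/- arXiv:2403.04348 — 3 statements merged into one kernel-verified Lean document; each statement's English description precedes it below -/
import Mathlib

section
/- Bound on the dual update (intermediate claim in the proof of Theorem 1): under the setup in the context, E‖u⁺ − u⋆‖²_X ≤ ‖u − u⋆‖²_X + pλ²(1 + 2ω)‖Wx̂‖²_X − 2pλ⟨u − u⋆, x̂⟩_X. -/
open MeasureTheory ProbabilityTheory Finset RealInnerProductSpace

/-!
Write `v = u - u⋆`, so that `S v = 0`. On `{θ = 1}` the mean `D̄` of the step is orthogonal
to `v` in `X`, hence
`‖v - λ W D‖²_X = ‖v‖²_X - 2λ ∑ ⟨vᵢ, Dᵢ⟩ + λ² (∑ ‖Dᵢ‖² - ‖∑ Dᵢ‖² / (2n))`.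
By independence of `θ`, the expected change is `p` times the expectation of this increment.
Unbiasedness turns the linear term into `-2λ ⟨v, x̂⟩_X` (using `S v = 0` once more). With
`aᵢ = x̂ᵢ - ŷ`, Jensen gives `E ‖∑ Dᵢ‖² ≥ ‖∑ aᵢ‖²`, and the variance bound together with
`‖∑ aᵢ‖² ≤ n ∑ ‖aᵢ‖²` bounds the quadratic term by
`(1 + 2ω) (∑ ‖aᵢ‖² - ‖∑ aᵢ‖² / (2n)) = (1 + 2ω) ‖W x̂‖²_X`.
-/

lemma norm_sum_sq_le_card_mul_sum_norm_sq {F : Type*} [SeminormedAddCommGroup F] {n : ℕ}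
    (a : Fin n → F) :
    ‖∑ i, a i‖ ^ 2 ≤ n * ∑ i, ‖a i‖ ^ 2 :=
  calc ‖∑ i, a i‖ ^ 2 ≤ (∑ i, ‖a i‖) ^ 2 := by gcongr; exact norm_sum_le _ _
    _ ≤ n * ∑ i, ‖a i‖ ^ 2 := by simpa using sq_sum_le_card_mul_sum_sq (s := univ) (f := (‖a ·‖))

section Algebra

variable {E : Type*} [NormedAddCommGroup E] [InnerProductSpace ℝ E] {n : ℕ}

lemma sum_inner_add_mul_inner_eq_zero {v : Fin n → E} {w : E}
    (hv : ∑ i, v i + (n : ℝ) • w = 0) (b : E) :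
    ∑ i, ⟪v i, b⟫ + n * ⟪w, b⟫ = 0 := by
  simpa [inner_add_left, sum_inner, real_inner_smul_left] using congrArg (⟪·, b⟫) hv

lemma sum_inner_sub_eq {v : Fin n → E} {w : E} (hv : ∑ i, v i + (n : ℝ) • w = 0)
    (x : Fin n → E) (y : E) :
    ∑ i, ⟪v i, x i - y⟫ = ∑ i, ⟪v i, x i⟫ + n * ⟪w, y⟫ := by
  simp only [inner_sub_right, sum_sub_distrib]
  linarith [sum_inner_add_mul_inner_eq_zero hv y]

-- The change of `‖v‖²_X` under `v ↦ v - λ W (y, 0)` when `S v = 0`.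
noncomputable def dualIncrement (lam : ℝ) (v y : Fin n → E) : ℝ :=
  -2 * lam * ∑ i, ⟪v i, y i⟫ + lam ^ 2 * (∑ i, ‖y i‖ ^ 2 - 1 / (2 * n) * ‖∑ i, y i‖ ^ 2)

lemma continuous_dualIncrement (lam : ℝ) (v : Fin n → E) :
    Continuous (dualIncrement lam v) := by
  unfold dualIncrement; fun_prop

lemma sum_norm_sq_add_dualUpdate (hn : n ≠ 0) {v : Fin n → E} {w : E}
    (hv : ∑ i, v i + (n : ℝ) • w = 0) (lam : ℝ) (y : Fin n → E) :
    ∑ i, ‖v i + lam • ((1 / (2 * n : ℝ)) • ∑ j, y j - y i)‖ ^ 2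
      + n * ‖w + lam • ((1 / (2 * n : ℝ)) • ∑ j, y j)‖ ^ 2
    = (∑ i, ‖v i‖ ^ 2 + n * ‖w‖ ^ 2) + dualIncrement lam v y := by
  set c : ℝ := 1 / (2 * n)
  set s := ∑ j, y j
  have hcross := sum_inner_add_mul_inner_eq_zero hv (c • s)
  have hmean : ∑ i, ⟪c • s, y i⟫ = c * ‖s‖ ^ 2 := by
    rw [← inner_sum, real_inner_smul_left, real_inner_self_eq_norm_sq]
  have hc : (n : ℝ) * c ^ 2 = c / 2 := by simp only [c]; field_simp
  simp only [dualIncrement, norm_add_sq_real, norm_sub_sq_real, inner_sub_right, inner_smul_right,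
    norm_smul, mul_pow, Real.norm_eq_abs, sq_abs, sum_add_distrib, sum_sub_distrib, ← mul_sum,
    sum_const, card_univ, Fintype.card_fin, nsmul_eq_mul, hmean] at hcross ⊢
  linear_combination (2 * lam) * hcross + lam ^ 2 * ‖s‖ ^ 2 * 2 * hc

lemma sum_norm_sq_sub_weightedMean (hn : n ≠ 0) (x : Fin n → E) (y : E) :
    ∑ i, ‖x i - (1 / (2 * n : ℝ)) • (∑ j, x j + (n : ℝ) • y)‖ ^ 2
      + n * ‖y - (1 / (2 * n : ℝ)) • (∑ j, x j + (n : ℝ) • y)‖ ^ 2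
    = ∑ i, ‖x i - y‖ ^ 2 - 1 / (2 * n) * ‖∑ i, (x i - y)‖ ^ 2 := by
  set c : ℝ := 1 / (2 * n)
  set a := ∑ i, (x i - y)
  have hmean : c • (∑ j, x j + (n : ℝ) • y) = y + c • a := by
    simp only [a, c, sum_sub_distrib, sum_const, card_univ, Fintype.card_fin]
    match_scalars <;> field_simp; ring
  have hsum : ∑ i, ⟪x i - y, c • a⟫ = c * ‖a‖ ^ 2 := by
    rw [← sum_inner, real_inner_smul_right, real_inner_self_eq_norm_sq]
  have hc : (n : ℝ) * c ^ 2 = c / 2 := by simp only [c]; field_simp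
  have hx : ∀ i, x i - (y + c • a) = (x i - y) - c • a := fun i => by abel
  rw [hmean, sub_add_cancel_left, norm_neg]
  simp only [hx, norm_sub_sq_real, norm_smul, mul_pow, Real.norm_eq_abs, sq_abs, sum_add_distrib,
    sum_sub_distrib, ← mul_sum, sum_const, card_univ, Fintype.card_fin, nsmul_eq_mul, hsum]
  linear_combination 2 * ‖a‖ ^ 2 * hc

end Algebra

section Probability

variable {Ω : Type*} [MeasurableSpace Ω] {P : Measure Ω}

lemma norm_integral_sq_le_integral_norm_sq [IsProbabilityMeasure P] {E : Type*}
    [NormedAddCommGroup E] [NormedSpace ℝ E] [CompleteSpace E] {f : Ω → E} (hf : MemLp f 2 P) :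
    ‖∫ t, f t ∂P‖ ^ 2 ≤ ∫ t, ‖f t‖ ^ 2 ∂P := by
  have hconvex : ConvexOn ℝ Set.univ (fun x : E => ‖x‖ ^ 2) :=
    convexOn_univ_norm.pow (fun _ _ => norm_nonneg _) 2
  exact hconvex.map_integral_le (continuous_norm.pow 2).continuousOn isClosed_univ
    (by simp) (hf.integrable one_le_two) hf.norm.integrable_sq

lemma integral_indicator_eq_mul_integral_of_indepFun {β : Type*} [MeasurableSpace β] {p : ℝ}
    {θ : Ω → Bool} {X : Ω → β} {g : β → ℝ} (hθ : Measurable θ)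
    (hθp : P {t | θ t = true} = ENNReal.ofReal p) (hp : 0 ≤ p) (hindep : IndepFun θ X P)
    (hg : Measurable g) (hgX : Integrable (fun t => g (X t)) P) :
    ∫ t, {t | θ t = true}.indicator (fun t => g (X t)) t ∂P = p * ∫ t, g (X t) ∂P := by
  set χ : Bool → ℝ := ({true} : Set Bool).indicator 1
  have hθset : MeasurableSet {t | θ t = true} := hθ (measurableSet_singleton true)
  have hχθ : ∀ t, χ (θ t) = {t | θ t = true}.indicator 1 t := fun t => by
    by_cases h : θ t <;> simp [h, χ]
  have hmean : ∫ t, χ (θ t) ∂P = p := by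
    simp only [hχθ, integral_indicator_one hθset, measureReal_def, hθp, ENNReal.toReal_ofReal hp]
  calc ∫ t, {t | θ t = true}.indicator (fun t => g (X t)) t ∂P
      = ∫ t, χ (θ t) * g (X t) ∂P := by
        congr with t; by_cases h : θ t <;> simp [h, χ]
    _ = p * ∫ t, g (X t) ∂P := by
        rw [← hmean]
        exact (hindep.comp (φ := χ) Measurable.of_discrete hg).integral_fun_mul_eq_mul_integral
          (Measurable.of_discrete.comp hθ).aestronglyMeasurable hgX.1

variable {E : Type*} [NormedAddCommGroup E] [InnerProductSpace ℝ E] {n : ℕ}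
  {D : Fin n → Ω → E} {a : Fin n → E}

lemma integrable_dualIncrement [IsFiniteMeasure P] (lam : ℝ) (v : Fin n → E)
    (hD : ∀ i, MemLp (D i) 2 P) :
    Integrable (fun t => dualIncrement lam v (fun i => D i t)) P := by
  have hS : MemLp (fun t => ∑ i, D i t) 2 P := memLp_finsetSum univ fun i _ => hD i
  refine .add (.const_mul (integrable_finsetSum _ fun i _ => ?_) _)
    (.const_mul (.sub (integrable_finsetSum _ fun i _ => ?_) (hS.norm.integrable_sq.const_mul _)) _)
  · exact ((hD i).integrable one_le_two).const_inner _
  · exact (hD i).norm.integrable_sq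

lemma integral_dualIncrement [CompleteSpace E] [IsProbabilityMeasure P] (lam : ℝ) (v : Fin n → E)
    (hD : ∀ i, MemLp (D i) 2 P) (hmean : ∀ i, ∫ t, D i t ∂P = a i) :
    ∫ t, dualIncrement lam v (fun i => D i t) ∂P
      = -2 * lam * ∑ i, ⟪v i, a i⟫ + lam ^ 2 *
          (∑ i, ∫ t, ‖D i t‖ ^ 2 ∂P - 1 / (2 * n) * ∫ t, ‖∑ i, D i t‖ ^ 2 ∂P) := by
  have hDi : ∀ i, Integrable (D i) P := fun i => (hD i).integrable one_le_two
  have hinner : ∀ i, Integrable (fun t => ⟪v i, D i t⟫) P := fun i => (hDi i).const_inner _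
  have hnormD : ∀ i, Integrable (fun t => ‖D i t‖ ^ 2) P := fun i => (hD i).norm.integrable_sq
  have hnormS : Integrable (fun t => ‖∑ i, D i t‖ ^ 2) P :=
    (memLp_finsetSum univ fun i _ => hD i).norm.integrable_sq
  have hinner_mean : ∀ i, ∫ t, ⟪v i, D i t⟫ ∂P = ⟪v i, a i⟫ := fun i => by
    rw [integral_inner (hDi i), hmean]
  have hsum_inner : Integrable (fun t => ∑ i, ⟪v i, D i t⟫) P :=
    integrable_finsetSum _ fun i _ => hinner i
  have hsum_norm : Integrable (fun t => ∑ i, ‖D i t‖ ^ 2) P :=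
    integrable_finsetSum _ fun i _ => hnormD i
  have hquad : Integrable (fun t => ∑ i, ‖D i t‖ ^ 2 - 1 / (2 * n) * ‖∑ i, D i t‖ ^ 2) P :=
    hsum_norm.sub (hnormS.const_mul _)
  simp only [dualIncrement]
  rw [integral_add (hsum_inner.const_mul _) (hquad.const_mul _), integral_const_mul,
    integral_const_mul, integral_sub hsum_norm (hnormS.const_mul _), integral_const_mul,
    integral_finsetSum _ fun i _ => hinner i, integral_finsetSum _ fun i _ => hnormD i]
  simp only [hinner_mean]

lemma integral_dualIncrement_le [CompleteSpace E] [IsProbabilityMeasure P] (hn : n ≠ 0) {ω : ℝ}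
    (hω : 0 ≤ ω) (lam : ℝ) (v : Fin n → E) (hD : ∀ i, MemLp (D i) 2 P)
    (hmean : ∀ i, ∫ t, D i t ∂P = a i)
    (hvar : ∑ i, ∫ t, ‖D i t‖ ^ 2 ∂P ≤ (1 + ω) * ∑ i, ‖a i‖ ^ 2) :
    ∫ t, dualIncrement lam v (fun i => D i t) ∂P
      ≤ -2 * lam * ∑ i, ⟪v i, a i⟫ +
          lam ^ 2 * ((1 + 2 * ω) * (∑ i, ‖a i‖ ^ 2 - 1 / (2 * n) * ‖∑ i, a i‖ ^ 2)) := by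
  rw [integral_dualIncrement lam v hD hmean]
  set c : ℝ := 1 / (2 * n)
  have hc : 0 ≤ c := by positivity
  have hjensen : ‖∑ i, a i‖ ^ 2 ≤ ∫ t, ‖∑ i, D i t‖ ^ 2 ∂P := by
    have hS : MemLp (fun t => ∑ i, D i t) 2 P := memLp_finsetSum univ fun i _ => hD i
    have h := norm_integral_sq_le_integral_norm_sq hS
    rwa [integral_finsetSum _ fun i _ => (hD i).integrable one_le_two,
      sum_congr rfl fun i _ => hmean i] at h
  have hcs : 2 * c * ‖∑ i, a i‖ ^ 2 ≤ ∑ i, ‖a i‖ ^ 2 := by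
    have h2c : 2 * c * n = 1 := by simp only [c]; field_simp
    calc 2 * c * ‖∑ i, a i‖ ^ 2 ≤ 2 * c * (n * ∑ i, ‖a i‖ ^ 2) := by
          gcongr; exact norm_sum_sq_le_card_mul_sum_norm_sq a
      _ = ∑ i, ‖a i‖ ^ 2 := by rw [← mul_assoc, h2c, one_mul]
  gcongr
  linarith [mul_le_mul_of_nonneg_left hjensen hc, mul_nonneg hω (sub_nonneg.2 hcs)]

end Probability

theorem stmt11_general {d n : ℕ} (hn : 1 ≤ n)
    (ω p lam : ℝ) (hω : 0 ≤ ω) (hp0 : 0 < p)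
    (uf usf : Fin n → EuclideanSpace ℝ (Fin d)) (ul usl : EuclideanSpace ℝ (Fin d))
    (hu0 : ∑ i, uf i + (n : ℝ) • ul = 0)
    (hus0 : ∑ i, usf i + (n : ℝ) • usl = 0)
    (xhat : Fin n → EuclideanSpace ℝ (Fin d)) (yhat : EuclideanSpace ℝ (Fin d))
    (xb : EuclideanSpace ℝ (Fin d))
    (hxb : xb = (1 / (2 * (n : ℝ))) • (∑ i, xhat i + (n : ℝ) • yhat))
    {Ω : Type*} [MeasurableSpace Ω] (P : Measure Ω) [IsProbabilityMeasure P]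
    (D : Fin n → Ω → EuclideanSpace ℝ (Fin d))
    (hD2 : ∀ i, MemLp (D i) 2 P)
    (hDmean : ∀ i, ∫ t, D i t ∂P = xhat i - yhat)
    (hDvar : ∑ i, ∫ t, ‖D i t‖ ^ 2 ∂P ≤ (1 + ω) * ∑ i, ‖xhat i - yhat‖ ^ 2)
    (θ : Ω → Bool) (hθmeas : Measurable θ)
    (hθp : P {t | θ t = true} = ENNReal.ofReal p)
    (hindep : IndepFun θ (fun t i => D i t) P)
    (Dbar : Ω → EuclideanSpace ℝ (Fin d))
    (hDbar : ∀ t, Dbar t = (1 / (2 * (n : ℝ))) • ∑ j, D j t)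
    (ufp : Fin n → Ω → EuclideanSpace ℝ (Fin d)) (ulp : Ω → EuclideanSpace ℝ (Fin d))
    (hufp : ∀ i t, ufp i t = if θ t then uf i + lam • (Dbar t - D i t) else uf i)
    (hulp : ∀ t, ulp t = if θ t then ul + lam • Dbar t else ul) :
    ∫ t, (∑ i, ‖ufp i t - usf i‖ ^ 2 + (n : ℝ) * ‖ulp t - usl‖ ^ 2) ∂P ≤
      (∑ i, ‖uf i - usf i‖ ^ 2 + (n : ℝ) * ‖ul - usl‖ ^ 2) +
        p * lam ^ 2 * (1 + 2 * ω) *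
          (∑ i, ‖xhat i - xb‖ ^ 2 + (n : ℝ) * ‖yhat - xb‖ ^ 2) -
        2 * p * lam *
          (∑ i, ⟪uf i - usf i, xhat i⟫ + (n : ℝ) * ⟪ul - usl, yhat⟫) := by
  have hn0 : n ≠ 0 := Nat.one_le_iff_ne_zero.mp hn
  set v := fun i => uf i - usf i
  have hv : ∑ i, v i + (n : ℝ) • (ul - usl) = 0 := by
    rw [sum_sub_distrib, smul_sub, sub_add_sub_comm, hu0, hus0, sub_zero]
  have hpoint : ∀ t, ∑ i, ‖ufp i t - usf i‖ ^ 2 + (n : ℝ) * ‖ulp t - usl‖ ^ 2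
      = (∑ i, ‖v i‖ ^ 2 + (n : ℝ) * ‖ul - usl‖ ^ 2)
        + {t | θ t = true}.indicator (fun t => dualIncrement lam v (fun i => D i t)) t := by
    intro t
    by_cases hθ : θ t
    · simp only [hufp, hulp, hDbar, hθ, if_true]
      rw [Set.indicator_of_mem (show t ∈ {t | θ t = true} from hθ),
        ← sum_norm_sq_add_dualUpdate hn0 hv]
      simp only [v, sub_add_eq_add_sub]
    · simp [hufp, hulp, hθ, v]
  have hincr := integrable_dualIncrement lam v hD2
  have hθset : MeasurableSet {t | θ t = true} := hθmeas (measurableSet_singleton true)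
  rw [integral_congr_ae (.of_forall hpoint), integral_add (integrable_const _)
    (hincr.indicator hθset), integral_const,
    integral_indicator_eq_mul_integral_of_indepFun hθmeas hθp hp0.le hindep
      (continuous_dualIncrement lam v).measurable hincr, probReal_univ, one_smul, hxb,
    sum_norm_sq_sub_weightedMean hn0, ← sum_inner_sub_eq hv]
  have hbound := integral_dualIncrement_le hn0 hω lam v hD2 hDmean hDvar
  linarith [mul_le_mul_of_nonneg_left hbound hp0.le]

/-- Bound on the dual update (intermediate claim in the proof of Theorem 1).
Elements of the weighted product space `X = (ℝ^d)^{n+1}` are encoded as pairs: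
`u = (uf, ul)`, `u⋆ = (usf, usl)`, `x̂ = (xhat, yhat)`, with
`⟨(a, b), (a', b')⟩_X = ∑ i ⟨a i, a' i⟩ + n ⟨b, b'⟩`. The condition `S u = 0` reads
`∑ i uf i + n ul = 0`; `D = (D_1, …, D_n, 0)`, `D̄ = (1/(2n)) ∑ j D j`, and on `{θ = 1}`
the update `u⁺ = u - λ W D` reads `uf⁺ i = uf i + λ (D̄ - D i)`, `ul⁺ = ul + λ D̄`. -/
theorem stmt11 {d n : ℕ} (hd : 1 ≤ d) (hn : 1 ≤ n)
    (ω p lam : ℝ) (hω : 0 ≤ ω) (hp0 : 0 < p) (hp1 : p ≤ 1) (hlam : 0 < lam)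
    (uf usf : Fin n → EuclideanSpace ℝ (Fin d)) (ul usl : EuclideanSpace ℝ (Fin d))
    (hu0 : ∑ i, uf i + (n : ℝ) • ul = 0)
    (hus0 : ∑ i, usf i + (n : ℝ) • usl = 0)
    (xhat : Fin n → EuclideanSpace ℝ (Fin d)) (yhat : EuclideanSpace ℝ (Fin d))
    (xb : EuclideanSpace ℝ (Fin d))
    (hxb : xb = (1 / (2 * (n : ℝ))) • (∑ i, xhat i + (n : ℝ) • yhat))
    {Ω : Type*} [MeasurableSpace Ω] (P : Measure Ω) [IsProbabilityMeasure P]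
    (D : Fin n → Ω → EuclideanSpace ℝ (Fin d))
    (hD2 : ∀ i, MemLp (D i) 2 P)
    (hDmean : ∀ i, ∫ t, D i t ∂P = xhat i - yhat)
    (hDvar : ∑ i, ∫ t, ‖D i t‖ ^ 2 ∂P ≤ (1 + ω) * ∑ i, ‖xhat i - yhat‖ ^ 2)
    (θ : Ω → Bool) (hθmeas : Measurable θ)
    (hθp : P {t | θ t = true} = ENNReal.ofReal p)
    (hindep : IndepFun θ (fun t i => D i t) P)
    (Dbar : Ω → EuclideanSpace ℝ (Fin d))
    (hDbar : ∀ t, Dbar t = (1 / (2 * (n : ℝ))) • ∑ j, D j t)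
    (ufp : Fin n → Ω → EuclideanSpace ℝ (Fin d)) (ulp : Ω → EuclideanSpace ℝ (Fin d))
    (hufp : ∀ i t, ufp i t = if θ t then uf i + lam • (Dbar t - D i t) else uf i)
    (hulp : ∀ t, ulp t = if θ t then ul + lam • Dbar t else ul) :
    ∫ t, (∑ i, ‖ufp i t - usf i‖ ^ 2 + (n : ℝ) * ‖ulp t - usl‖ ^ 2) ∂P ≤
      (∑ i, ‖uf i - usf i‖ ^ 2 + (n : ℝ) * ‖ul - usl‖ ^ 2) +
        p * lam ^ 2 * (1 + 2 * ω) *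
          (∑ i, ‖xhat i - xb‖ ^ 2 + (n : ℝ) * ‖yhat - xb‖ ^ 2) -
        2 * p * lam *
          (∑ i, ⟪uf i - usf i, xhat i⟫ + (n : ℝ) * ⟪ul - usl, yhat⟫) :=
  stmt11_general hn ω p lam hω hp0 uf usf ul usl hu0 hus0 xhat yhat xb hxb P D hD2 hDmean hDvar θ
    hθmeas hθp hindep Dbar hDbar ufp ulp hufp hulp
end

section
/- Bound on the primal update (intermediate claim in the proof of Theorem 1): under the setup in the context, E‖x⁺ − 1x⋆‖²_X ≤ ‖x̂ − 1x⋆‖²_X − (2ρ − ρ²(1 + ω_av))·‖Wx̂‖²_X. -/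
open MeasureTheory Finset RealInnerProductSpace

/-! Since `E D̄ = x̄ - ŷ`, we have `x̂ - 1x⋆ = Wx̂ + 1(x̄ - x⋆)` and
`x⁺ - 1x⋆ = (1 - ρ) Wx̂ + 1(x̄ - x⋆) + ρ 1V` with `V = D̄ - E D̄` centred. Constant vectors
are orthogonal to the range of `W` and `‖1z‖²_X = 2n ‖z‖²`, so
`‖x̂ - 1x⋆‖² = ‖Wx̂‖² + 2n ‖x̄ - x⋆‖²` and
`E‖x⁺ - 1x⋆‖² = (1 - ρ)² ‖Wx̂‖² + 2n ‖x̄ - x⋆‖² + 2n ρ² E‖V‖²`.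
The variance assumption bounds the last term by `(ρ² ω_av / 2) ∑ ‖x̂ᵢ - ŷ‖²`, and
`∑ ‖x̂ᵢ - ŷ‖² ≤ 2 ‖Wx̂‖²` because `‖a - b‖² ≤ 2‖a‖² + 2‖b‖²`. -/

section WeightedProduct

variable {ι E : Type*} [Fintype ι] [NormedAddCommGroup E] [InnerProductSpace ℝ E]

/-- The squared norm `‖(x, y)‖²_X` on `X = E^ι × E`, where `y` carries the weight `|ι|`. -/
noncomputable def weightedSqNorm (x : ι → E) (y : E) : ℝ :=
  ∑ i, ‖x i‖ ^ 2 + (Fintype.card ι : ℝ) * ‖y‖ ^ 2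

/-- The point `x̄` with `Sx = 1x̄`. -/
noncomputable def barycenter (x : ι → E) (y : E) : E :=
  (1 / (2 * (Fintype.card ι : ℝ))) • (∑ i, x i + (Fintype.card ι : ℝ) • y)

theorem weightedSqNorm_smul (t : ℝ) (x : ι → E) (y : E) :
    weightedSqNorm (fun i => t • x i) (t • y) = t ^ 2 * weightedSqNorm x y := by
  simp only [weightedSqNorm, norm_smul, mul_pow, Real.norm_eq_abs, sq_abs, ← mul_sum]
  ring

theorem weightedSqNorm_add_const (x : ι → E) (y v : E) :
    weightedSqNorm (fun i => x i + v) (y + v) = weightedSqNorm x y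
      + 2 * ⟪∑ i, x i + (Fintype.card ι : ℝ) • y, v⟫ + 2 * Fintype.card ι * ‖v‖ ^ 2 := by
  simp only [weightedSqNorm, norm_add_sq_real, sum_add_distrib, inner_add_left, sum_inner,
    real_inner_smul_left, ← mul_sum, sum_const, card_univ, nsmul_eq_mul]
  ring

theorem sum_sub_barycenter_add (x : ι → E) (y : E) :
    ∑ i, (x i - barycenter x y) + (Fintype.card ι : ℝ) • (y - barycenter x y) = 0 := by
  rcases isEmpty_or_nonempty ι with hι | hι
  · simp [barycenter]
  have hn : (Fintype.card ι : ℝ) ≠ 0 := by positivity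
  simp only [barycenter, sum_sub_distrib, sum_const, card_univ, ← Nat.cast_smul_eq_nsmul ℝ]
  match_scalars <;> field_simp <;> ring

/-- Pythagoras in `X`: constant vectors are orthogonal to `Wx`. -/
theorem weightedSqNorm_smul_sub_barycenter_add (t : ℝ) (x : ι → E) (y z : E) :
    weightedSqNorm (fun i => t • (x i - barycenter x y) + z) (t • (y - barycenter x y) + z)
      = t ^ 2 * weightedSqNorm (fun i => x i - barycenter x y) (y - barycenter x y)
        + 2 * Fintype.card ι * ‖z‖ ^ 2 := by
  rw [weightedSqNorm_add_const, weightedSqNorm_smul, ← smul_sum, smul_comm, ← smul_add,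
    sum_sub_barycenter_add, smul_zero, inner_zero_left, mul_zero, add_zero]

theorem sum_norm_sub_sq_le (x : ι → E) (y c : E) :
    ∑ i, ‖x i - y‖ ^ 2 ≤ 2 * weightedSqNorm (fun i => x i - c) (y - c) := by
  have key : ∀ i, ‖x i - y‖ ^ 2 ≤ 2 * ‖x i - c‖ ^ 2 + 2 * ‖y - c‖ ^ 2 := fun i => by
    have := parallelogram_law_with_norm ℝ (x i - c) (y - c)
    rw [sub_sub_sub_cancel_right] at this
    linarith [sq_nonneg ‖x i - c + (y - c)‖]
  calc ∑ i, ‖x i - y‖ ^ 2 ≤ ∑ i, (2 * ‖x i - c‖ ^ 2 + 2 * ‖y - c‖ ^ 2) :=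
        sum_le_sum fun i _ => key i
    _ = 2 * weightedSqNorm (fun i => x i - c) (y - c) := by
      simp only [weightedSqNorm, sum_add_distrib, ← mul_sum, sum_const, card_univ, nsmul_eq_mul]
      ring

theorem barycenter_sub_right [Nonempty ι] (x : ι → E) (y : E) :
    barycenter x y - y = (1 / (2 * (Fintype.card ι : ℝ))) • ∑ i, (x i - y) := by
  have hn : (Fintype.card ι : ℝ) ≠ 0 := by positivity
  simp only [barycenter, sum_sub_distrib, sum_const, card_univ, ← Nat.cast_smul_eq_nsmul ℝ]
  match_scalars
  · field_simp
  · field_simp; ring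

theorem weightedSqNorm_sub_const (x : ι → E) (y c : E) :
    weightedSqNorm (fun i => x i - c) (y - c)
      = weightedSqNorm (fun i => x i - barycenter x y) (y - barycenter x y)
        + 2 * Fintype.card ι * ‖barycenter x y - c‖ ^ 2 := by
  simpa only [one_smul, one_pow, one_mul, sub_add_sub_cancel] using
    weightedSqNorm_smul_sub_barycenter_add 1 x y (barycenter x y - c)

theorem weightedSqNorm_relax_sub (ρ : ℝ) (x : ι → E) (y z c : E) :
    weightedSqNorm (fun i => (1 - ρ) • x i + ρ • z - c) ((1 - ρ) • y + ρ • z - c)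
      = (1 - ρ) ^ 2 * weightedSqNorm (fun i => x i - barycenter x y) (y - barycenter x y)
        + 2 * Fintype.card ι * ‖barycenter x y - c + ρ • (z - barycenter x y)‖ ^ 2 := by
  rw [← weightedSqNorm_smul_sub_barycenter_add]
  congr 1
  · funext i; module
  · module

variable [CompleteSpace E] {Ω : Type*} [MeasurableSpace Ω] {P : Measure Ω} [IsProbabilityMeasure P]

theorem integral_norm_add_smul_sub_integral_sq {Z : Ω → E} (hZ : MemLp Z 2 P) (c : E)
    (ρ : ℝ) :
    ∫ t, ‖c + ρ • (Z t - ∫ s, Z s ∂P)‖ ^ 2 ∂P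
      = ‖c‖ ^ 2 + ρ ^ 2 * ∫ t, ‖Z t - ∫ s, Z s ∂P‖ ^ 2 ∂P := by
  have hW : MemLp (fun t => Z t - ∫ s, Z s ∂P) 2 P := hZ.sub (memLp_const _)
  have hWint : Integrable (fun t => Z t - ∫ s, Z s ∂P) P := hW.integrable one_le_two
  have hinner : Integrable (fun t => 2 * (ρ * ⟪c, Z t - ∫ s, Z s ∂P⟫)) P :=
    ((hWint.const_inner c).const_mul ρ).const_mul 2
  have hsq : Integrable (fun t => ρ ^ 2 * ‖Z t - ∫ s, Z s ∂P‖ ^ 2) P :=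
    hW.norm.integrable_sq.const_mul _
  have hcentred : ∫ t, ⟪c, Z t - ∫ s, Z s ∂P⟫ ∂P = 0 := by
    rw [integral_inner hWint, integral_sub (hZ.integrable one_le_two) (integrable_const _)]
    simp
  simp only [norm_add_sq_real, inner_smul_right, norm_smul, mul_pow, Real.norm_eq_abs, sq_abs]
  rw [integral_add (f := fun t => ‖c‖ ^ 2 + _) ((integrable_const _).add hinner) hsq,
    integral_add (integrable_const _) hinner, integral_const_mul, integral_const_mul,
    integral_const_mul, hcentred]
  simp

theorem integral_weightedSqNorm_relax_sub_le [Nonempty ι] (ρ ω : ℝ) (hω : 0 ≤ ω) (x : ι → E)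
    (y c : E) {V : Ω → E} (hV : MemLp V 2 P) (hmean : ∫ t, V t ∂P = barycenter x y - y)
    (hvar : ∫ t, ‖V t - ∫ s, V s ∂P‖ ^ 2 ∂P ≤
      ω / (4 * (Fintype.card ι : ℝ)) * ∑ i, ‖x i - y‖ ^ 2) :
    ∫ t, weightedSqNorm (fun i => (1 - ρ) • x i + ρ • (y + V t) - c)
        ((1 - ρ) • y + ρ • (y + V t) - c) ∂P
      ≤ weightedSqNorm (fun i => x i - c) (y - c) - (2 * ρ - ρ ^ 2 * (1 + ω)) *
        weightedSqNorm (fun i => x i - barycenter x y) (y - barycenter x y) := by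
  set n : ℝ := (Fintype.card ι : ℝ)
  set b := barycenter x y with hb
  set Q := weightedSqNorm (fun i => x i - b) (y - b)
  have hstep (t : Ω) : weightedSqNorm (fun i => (1 - ρ) • x i + ρ • (y + V t) - c)
        ((1 - ρ) • y + ρ • (y + V t) - c)
      = (1 - ρ) ^ 2 * Q + 2 * n * ‖b - c + ρ • (V t - ∫ s, V s ∂P)‖ ^ 2 := by
    rw [weightedSqNorm_relax_sub, ← hb, hmean]
    congr 4
    module
  have hnoise : 2 * n * ρ ^ 2 * ∫ t, ‖V t - ∫ s, V s ∂P‖ ^ 2 ∂P ≤ ρ ^ 2 * ω * Q := by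
    have hspread := sum_norm_sub_sq_le x y b
    have hn : n ≠ 0 := by positivity
    calc 2 * n * ρ ^ 2 * ∫ t, ‖V t - ∫ s, V s ∂P‖ ^ 2 ∂P
        ≤ 2 * n * ρ ^ 2 * (ω / (4 * n) * ∑ i, ‖x i - y‖ ^ 2) := by gcongr
      _ = ρ ^ 2 * ω / 2 * ∑ i, ‖x i - y‖ ^ 2 := by field_simp; ring
      _ ≤ ρ ^ 2 * ω / 2 * (2 * Q) := by gcongr
      _ = ρ ^ 2 * ω * Q := by ring
  have hL2 : MemLp (fun t => b - c + ρ • (V t - ∫ s, V s ∂P)) 2 P :=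
    (memLp_const (b - c)).add ((hV.sub (memLp_const _)).const_smul ρ)
  rw [integral_congr_ae (ae_of_all _ hstep),
    integral_add (integrable_const _) (hL2.norm.integrable_sq.const_mul _),
    integral_const, integral_const_mul, integral_norm_add_smul_sub_integral_sq hV,
    weightedSqNorm_sub_const]
  simp only [probReal_univ, one_smul]
  linarith

end WeightedProduct

theorem stmt12_general {d n : ℕ} (hn : 1 ≤ n)
    (ωav ρ : ℝ) (hωav : 0 ≤ ωav)
    (xhat : Fin n → EuclideanSpace ℝ (Fin d)) (yhat xs : EuclideanSpace ℝ (Fin d))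
    (xb : EuclideanSpace ℝ (Fin d))
    (hxb : xb = (1 / (2 * (n : ℝ))) • (∑ i, xhat i + (n : ℝ) • yhat))
    {Ω : Type*} [MeasurableSpace Ω] (P : Measure Ω) [IsProbabilityMeasure P]
    (D : Fin n → Ω → EuclideanSpace ℝ (Fin d))
    (hD2 : ∀ i, MemLp (D i) 2 P)
    (hDmean : ∀ i, ∫ t, D i t ∂P = xhat i - yhat)
    (Dbar : Ω → EuclideanSpace ℝ (Fin d))
    (hDbar : ∀ t, Dbar t = (1 / (2 * (n : ℝ))) • ∑ j, D j t)
    (hDbarVar : ∫ t, ‖Dbar t - ∫ s, Dbar s ∂P‖ ^ 2 ∂P ≤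
      (ωav / (4 * (n : ℝ))) * ∑ i, ‖xhat i - yhat‖ ^ 2)
    (xfp : Fin n → Ω → EuclideanSpace ℝ (Fin d)) (xlp : Ω → EuclideanSpace ℝ (Fin d))
    (hxfp : ∀ i t, xfp i t = (1 - ρ) • xhat i + ρ • (yhat + Dbar t))
    (hxlp : ∀ t, xlp t = (1 - ρ) • yhat + ρ • (yhat + Dbar t)) :
    ∫ t, (∑ i, ‖xfp i t - xs‖ ^ 2 + (n : ℝ) * ‖xlp t - xs‖ ^ 2) ∂P ≤
      (∑ i, ‖xhat i - xs‖ ^ 2 + (n : ℝ) * ‖yhat - xs‖ ^ 2) -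
        (2 * ρ - ρ ^ 2 * (1 + ωav)) *
          (∑ i, ‖xhat i - xb‖ ^ 2 + (n : ℝ) * ‖yhat - xb‖ ^ 2) := by
  have : Nonempty (Fin n) := ⟨⟨0, hn⟩⟩
  obtain rfl : xb = barycenter xhat yhat := by rw [hxb, barycenter, Fintype.card_fin]
  have hDbarL2 : MemLp Dbar 2 P := by
    rw [show Dbar = (1 / (2 * (n : ℝ))) • ∑ j, D j from funext fun t => by simp [hDbar]]
    exact (memLp_finsetSum' _ fun j _ => hD2 j).const_smul _
  have hmean : ∫ t, Dbar t ∂P = barycenter xhat yhat - yhat := by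
    simp_rw [hDbar]
    rw [integral_smul, integral_finsetSum _ fun j _ => (hD2 j).integrable one_le_two]
    simp_rw [hDmean]
    rw [barycenter_sub_right, Fintype.card_fin]
  have key := integral_weightedSqNorm_relax_sub_le ρ ωav hωav xhat yhat xs hDbarL2 hmean
    (by rwa [Fintype.card_fin])
  simpa only [weightedSqNorm, Fintype.card_fin, hxfp, hxlp] using key

/-- Bound on the primal update (intermediate claim in the proof of Theorem 1).
Elements of the weighted product space `X = (ℝ^d)^{n+1}` are encoded as pairs:
`x̂ = (xhat, yhat)` with norm `‖(a, b)‖²_X = ∑ i ‖a i‖² + n ‖b‖²`, barycenter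
`x̄ = (1/(2n))(∑ i xhat i + n yhat)`, `D̄ = (1/(2n)) ∑ j D j`, and the update
`x⁺ = (1 - ρ) x̂ + ρ 1(ŷ + D̄)` componentwise. -/
theorem stmt12 {d n : ℕ} (hd : 1 ≤ d) (hn : 1 ≤ n)
    (ωav ρ : ℝ) (hωav : 0 ≤ ωav)
    (xhat : Fin n → EuclideanSpace ℝ (Fin d)) (yhat xs : EuclideanSpace ℝ (Fin d))
    (xb : EuclideanSpace ℝ (Fin d))
    (hxb : xb = (1 / (2 * (n : ℝ))) • (∑ i, xhat i + (n : ℝ) • yhat))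
    {Ω : Type*} [MeasurableSpace Ω] (P : Measure Ω) [IsProbabilityMeasure P]
    (D : Fin n → Ω → EuclideanSpace ℝ (Fin d))
    (hD2 : ∀ i, MemLp (D i) 2 P)
    (hDmean : ∀ i, ∫ t, D i t ∂P = xhat i - yhat)
    (Dbar : Ω → EuclideanSpace ℝ (Fin d))
    (hDbar : ∀ t, Dbar t = (1 / (2 * (n : ℝ))) • ∑ j, D j t)
    (hDbarVar : ∫ t, ‖Dbar t - ∫ s, Dbar s ∂P‖ ^ 2 ∂P ≤
      (ωav / (4 * (n : ℝ))) * ∑ i, ‖xhat i - yhat‖ ^ 2)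
    (xfp : Fin n → Ω → EuclideanSpace ℝ (Fin d)) (xlp : Ω → EuclideanSpace ℝ (Fin d))
    (hxfp : ∀ i t, xfp i t = (1 - ρ) • xhat i + ρ • (yhat + Dbar t))
    (hxlp : ∀ t, xlp t = (1 - ρ) • yhat + ρ • (yhat + Dbar t)) :
    ∫ t, (∑ i, ‖xfp i t - xs‖ ^ 2 + (n : ℝ) * ‖xlp t - xs‖ ^ 2) ∂P ≤
      (∑ i, ‖xhat i - xs‖ ^ 2 + (n : ℝ) * ‖yhat - xs‖ ^ 2) -
        (2 * ρ - ρ ^ 2 * (1 + ωav)) *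
          (∑ i, ‖xhat i - xb‖ ^ 2 + (n : ℝ) * ‖yhat - xb‖ ^ 2) :=
  stmt12_general hn ωav ρ hωav xhat yhat xs xb hxb P D hD2 hDmean Dbar hDbar hDbarVar xfp xlp hxfp
    hxlp
end

section
/- Explicit rate bound with the tuned parameters (core of the iteration-complexity claim): let 0 < μ ≤ L, κ = L/μ, ω ≥ 0, ω_av ≥ 0, and set γ = 1/L, χ = ρ = 1/(1 + ω_av), and p = min(√((1 + ω_av)(1 + ω)/κ), 1). Then (i) p ∈ (0,1] and 2ρ − ρ²(1 + ω_av) − χ = 0, so the conditions of Theorem 1 are met; and (ii) the rate τ = max((1 − γμ)², (1 − γL)², 1 − p²χ/(1 + 2ω)) satisfies τ ≤ 1 − (1/2)·min(1/κ, 1/((1 + ω_av)(1 + ω))). -/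
/-!
With `γ = 1/L`, both gradient-step factors have the form `(1 - a)²` with `a = γμ = 1/κ` or
`a = γL = 1`; since `a ∈ [1/κ, 1]`, each is at most `1 - a ≤ 1 - 1/κ`. For the compression
factor, `p² = min((1 + ω_av)(1 + ω)/κ, 1)`, and `1 + 2ω ≤ 2(1 + ω)` gives
`p² χ/(1 + 2ω) ≥ p²/(2(1 + ω_av)(1 + ω)) = (1/2) min(1/κ, 1/((1 + ω_av)(1 + ω)))`.
-/

open Real

lemma min_sqrt_one_sq {x : ℝ} (hx : 0 ≤ x) : min (√x) 1 ^ 2 = min x 1 := by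
  rcases le_total x 1 with h | h
  · rw [min_eq_left (sqrt_le_one.mpr h), min_eq_left h, sq_sqrt hx]
  · rw [min_eq_right (one_le_sqrt.mpr h), min_eq_right h, one_pow]

lemma sq_one_sub_le_one_sub_half {a m : ℝ} (hm : 0 ≤ m) (hma : m ≤ a) (ha : a ≤ 1) :
    (1 - a) ^ 2 ≤ 1 - m / 2 := by
  nlinarith

lemma half_min_inv_eq_sq_min_sqrt_one_div {κ a : ℝ} (hκ : 0 < κ) (ha : 0 < a) :
    (1 / 2) * min (1 / κ) (1 / a) = min (√(a / κ)) 1 ^ 2 / (2 * a) := by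
  have hmin : min (1 / κ) (1 / a) = min (a / κ) 1 / a := by
    rw [← min_div_div_right ha.le, div_div_cancel_left' ha.ne', one_div]
  rw [hmin, min_sqrt_one_sq (by positivity)]
  ring

lemma half_min_inv_le_compression_factor {κ b c : ℝ} (hκ : 0 < κ) (hb : 0 < b) (hc : 0 ≤ c) :
    (1 / 2) * min (1 / κ) (1 / (b * (1 + c))) ≤
      min (√(b * (1 + c) / κ)) 1 ^ 2 * (1 / b) / (1 + 2 * c) := by
  calc (1 / 2) * min (1 / κ) (1 / (b * (1 + c)))
      = min (√(b * (1 + c) / κ)) 1 ^ 2 / (2 * (b * (1 + c))) :=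
        half_min_inv_eq_sq_min_sqrt_one_div hκ (by positivity)
    _ ≤ min (√(b * (1 + c) / κ)) 1 ^ 2 / (b * (1 + 2 * c)) :=
        div_le_div_of_nonneg_left (sq_nonneg _) (by positivity) (by nlinarith)
    _ = min (√(b * (1 + c) / κ)) 1 ^ 2 * (1 / b) / (1 + 2 * c) := by
        field_simp

/-- Explicit rate bound with the tuned parameters of LoCoDL: with `γ = 1/L`,
`χ = ρ = 1/(1 + ω_av)` and `p = min(√((1 + ω_av)(1 + ω)/κ), 1)`, the conditions of
Theorem 1 are met and the rate `τ` satisfies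
`τ ≤ 1 - (1/2) min(1/κ, 1/((1 + ω_av)(1 + ω)))`. -/
theorem stmt15 (L mu ω ωav : ℝ) (hmu : 0 < mu) (hmuL : mu ≤ L)
    (hω : 0 ≤ ω) (hωav : 0 ≤ ωav)
    (κ γ χ ρ p : ℝ)
    (hκ : κ = L / mu) (hγ : γ = 1 / L)
    (hχ : χ = 1 / (1 + ωav)) (hρ : ρ = 1 / (1 + ωav))
    (hp : p = min (Real.sqrt ((1 + ωav) * (1 + ω) / κ)) 1) :
    -- (i) the conditions of Theorem 1 are met
    (0 < p ∧ p ≤ 1 ∧ 2 * ρ - ρ ^ 2 * (1 + ωav) - χ = 0) ∧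
    -- (ii) explicit bound on the rate
    max (max ((1 - γ * mu) ^ 2) ((1 - γ * L) ^ 2)) (1 - p ^ 2 * χ / (1 + 2 * ω)) ≤
      1 - (1 / 2) * min (1 / κ) (1 / ((1 + ωav) * (1 + ω))) := by
  have hL : 0 < L := hmu.trans_le hmuL
  have hκ0 : 0 < κ := hκ ▸ div_pos hL hmu
  have hγmu : γ * mu = 1 / κ := by rw [hγ, hκ]; field_simp
  have hγL : γ * L = 1 := by rw [hγ]; field_simp
  have hγmuL : γ * mu ≤ γ * L := mul_le_mul_of_nonneg_left hmuL (hγ ▸ by positivity)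
  set m := min (1 / κ) (1 / ((1 + ωav) * (1 + ω)))
  have hm0 : 0 ≤ m := le_min (by positivity) (by positivity)
  have hm : m ≤ γ * mu := hγmu ▸ min_le_left _ _
  refine ⟨⟨?_, hp ▸ min_le_right _ _, ?_⟩, max_le (max_le ?_ ?_) ?_⟩
  · rw [hp]
    exact lt_min (sqrt_pos.mpr (by positivity)) one_pos
  · rw [hρ, hχ]
    field_simp
    ring
  · linarith [sq_one_sub_le_one_sub_half hm0 hm (hγL ▸ hγmuL)]
  · linarith [sq_one_sub_le_one_sub_half hm0 (hm.trans hγmuL) hγL.le]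
  · rw [hχ, hp]
    linarith [half_min_inv_le_compression_factor hκ0 (by positivity : (0 : ℝ) < 1 + ωav) hω]
end
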